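/- arXiv:2307.10226 — 3 statements merged into one kernel-verified Lean document; each statement's English description precedes it below -/
import Mathlib

section
/- For any first-order sentence F and any model I of F whose universe is finite, I satisfies SM[F] if and only if, for every nonempty finite set Y of atoms formed from the predicate constants of σ(F) and an infinite supply of variables, I satisfies FLF_F(Y). -/
set_option linter.unusedVariables false

namespace SMLF

/-- Terms: object variables (named by naturals) and object constants.
There are no function constants of positive arity. -/
inductive Term (C : Type) where
  | var : ℕ → Term C
  | const : C → Term C

variable {C P D : Type} {ar : P → ℕ}

def Term.eval (cI : C → D) (v : ℕ → D) : Term C → D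
  | .var x => v x
  | .const c => cI c

def Term.vars : Term C → Set ℕ
  | .var x => {x}
  | .const _ => ∅

def Term.consts : Term C → Set C
  | .var _ => ∅
  | .const c => {c}

def Term.subst (θ : ℕ → Term C) : Term C → Term C
  | .var x => θ x
  | .const c => .const c

def Term.isVar : Term C → Prop
  | .var _ => True
  | .const _ => False

/-- A (non-equality) atom `p(t₁,…,tₖ)`. -/
abbrev Atom (C P : Type) (ar : P → ℕ) := Σ p : P, Fin (ar p) → Term C

def Atom.subst (θ : ℕ → Term C) (a : Atom C P ar) : Atom C P ar :=
  ⟨a.1, fun i => (a.2 i).subst θ⟩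

def Atom.vars (a : Atom C P ar) : Set ℕ := {x | ∃ i, a.2 i = Term.var x}

/-- An interpretation of the predicate constants over universe `D`
(also used for tuples `u` of predicate variables). -/
def PredI (P : Type) (ar : P → ℕ) (D : Type) : Type := ∀ p : P, (Fin (ar p) → D) → Prop

/-- `u ≤ p` : conjunction of ∀x(uᵢ(x) → pᵢ(x)). -/
def PredI.le (uI pI : PredI P ar D) : Prop := ∀ p xs, uI p xs → pI p xs

/-- `u = p` : conjunction of ∀x(uᵢ(x) ↔ pᵢ(x)). -/
def PredI.eqv (uI pI : PredI P ar D) : Prop := ∀ p xs, uI p xs ↔ pI p xs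

/-- `u < p` : (u ≤ p) ∧ ¬(u = p). -/
def PredI.lt (uI pI : PredI P ar D) : Prop := PredI.le uI pI ∧ ¬ PredI.eqv uI pI

/-- `Nonempty(u)` : ∃x¹ u₁(x¹) ∨ … ∨ ∃xⁿ uₙ(xⁿ). -/
def PredI.nonemp (uI : PredI P ar D) : Prop := ∃ p xs, uI p xs

/-- First-order formulas (¬F is shorthand for F → ⊥). -/
inductive Fml (C P : Type) (ar : P → ℕ) where
  | atom : (p : P) → (Fin (ar p) → Term C) → Fml C P ar
  | eq : Term C → Term C → Fml C P ar
  | bot : Fml C P ar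
  | and : Fml C P ar → Fml C P ar → Fml C P ar
  | or : Fml C P ar → Fml C P ar → Fml C P ar
  | imp : Fml C P ar → Fml C P ar → Fml C P ar
  | all : ℕ → Fml C P ar → Fml C P ar
  | ex : ℕ → Fml C P ar → Fml C P ar

/-- Tarskian satisfaction `I,v ⊨ F`. -/
def Fml.sat (cI : C → D) (pI : PredI P ar D) : Fml C P ar → (ℕ → D) → Prop
  | .atom p t, v => pI p (fun i => (t i).eval cI v)
  | .eq t₁ t₂, v => t₁.eval cI v = t₂.eval cI v
  | .bot, _ => False
  | .and F G, v => F.sat cI pI v ∧ G.sat cI pI v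
  | .or F G, v => F.sat cI pI v ∨ G.sat cI pI v
  | .imp F G, v => F.sat cI pI v → G.sat cI pI v
  | .all x F, v => ∀ d : D, F.sat cI pI (Function.update v x d)
  | .ex x F, v => ∃ d : D, F.sat cI pI (Function.update v x d)

/-- Satisfaction of a sentence (truth under every valuation). -/
def Fml.satSent (cI : C → D) (pI : PredI P ar D) (F : Fml C P ar) : Prop :=
  ∀ v : ℕ → D, F.sat cI pI v

/-- Satisfaction of `F*(u)` (atoms read via `uI`, the `F → G` clause also keeps `F → G`). -/
def Fml.satStar (cI : C → D) (pI uI : PredI P ar D) : Fml C P ar → (ℕ → D) → Prop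
  | .atom p t, v => uI p (fun i => (t i).eval cI v)
  | .eq t₁ t₂, v => t₁.eval cI v = t₂.eval cI v
  | .bot, _ => False
  | .and F G, v => F.satStar cI pI uI v ∧ G.satStar cI pI uI v
  | .or F G, v => F.satStar cI pI uI v ∨ G.satStar cI pI uI v
  | .imp F G, v => (F.satStar cI pI uI v → G.satStar cI pI uI v) ∧ (F.sat cI pI v → G.sat cI pI v)
  | .all x F, v => ∀ d : D, F.satStar cI pI uI (Function.update v x d)
  | .ex x F, v => ∃ d : D, F.satStar cI pI uI (Function.update v x d)

/-- `I ⊨ SM[F]` for a sentence `F`: `F ∧ ¬∃u((u < p) ∧ F*(u))`. -/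
def satSM (cI : C → D) (pI : PredI P ar D) (F : Fml C P ar) : Prop :=
  F.satSent cI pI ∧
    ¬ ∃ uI : PredI P ar D, PredI.lt uI pI ∧ ∀ v : ℕ → D, F.satStar cI pI uI v

/-- Satisfaction of `NES_F(u)`. -/
def Fml.satNES (cI : C → D) (pI uI : PredI P ar D) : Fml C P ar → (ℕ → D) → Prop
  | .atom p t, v => pI p (fun i => (t i).eval cI v) ∧ ¬ uI p (fun i => (t i).eval cI v)
  | .eq t₁ t₂, v => t₁.eval cI v = t₂.eval cI v
  | .bot, _ => False
  | .and F G, v => F.satNES cI pI uI v ∧ G.satNES cI pI uI v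
  | .or F G, v => F.satNES cI pI uI v ∨ G.satNES cI pI uI v
  | .imp F G, v => (F.satNES cI pI uI v → G.satNES cI pI uI v) ∧ (F.sat cI pI v → G.sat cI pI v)
  | .all x F, v => ∀ d : D, F.satNES cI pI uI (Function.update v x d)
  | .ex x F, v => ∃ d : D, F.satNES cI pI uI (Function.update v x d)

def Fml.freeVars : Fml C P ar → Set ℕ
  | .atom _ t => ⋃ i, (t i).vars
  | .eq t₁ t₂ => t₁.vars ∪ t₂.vars
  | .bot => ∅
  | .and F G => F.freeVars ∪ G.freeVars
  | .or F G => F.freeVars ∪ G.freeVars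
  | .imp F G => F.freeVars ∪ G.freeVars
  | .all x F => F.freeVars \ {x}
  | .ex x F => F.freeVars \ {x}

/-- The list of quantified (bound) variable occurrences, in order. -/
def Fml.quantVars : Fml C P ar → List ℕ
  | .atom _ _ => []
  | .eq _ _ => []
  | .bot => []
  | .and F G => F.quantVars ++ G.quantVars
  | .or F G => F.quantVars ++ G.quantVars
  | .imp F G => F.quantVars ++ G.quantVars
  | .all x F => x :: F.quantVars
  | .ex x F => x :: F.quantVars

/-- Rectified form: no variable is both bound and free, and quantifiers
are followed by pairwise distinct variables. -/
def Fml.rectified (F : Fml C P ar) : Prop :=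
  F.quantVars.Nodup ∧ ∀ x ∈ F.quantVars, x ∉ F.freeVars

def Fml.preds : Fml C P ar → Set P
  | .atom p _ => {p}
  | .eq _ _ => ∅
  | .bot => ∅
  | .and F G => F.preds ∪ G.preds
  | .or F G => F.preds ∪ G.preds
  | .imp F G => F.preds ∪ G.preds
  | .all _ F => F.preds
  | .ex _ F => F.preds

def Fml.consts : Fml C P ar → Set C
  | .atom _ t => ⋃ i, (t i).consts
  | .eq t₁ t₂ => t₁.consts ∪ t₂.consts
  | .bot => ∅
  | .and F G => F.consts ∪ G.consts
  | .or F G => F.consts ∪ G.consts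
  | .imp F G => F.consts ∪ G.consts
  | .all _ F => F.consts
  | .ex _ F => F.consts

/-- All (non-equality) atoms occurring in a formula. -/
def Fml.atomsOf : Fml C P ar → Set (Atom C P ar)
  | .atom p t => {⟨p, t⟩}
  | .eq _ _ => ∅
  | .bot => ∅
  | .and F G => F.atomsOf ∪ G.atomsOf
  | .or F G => F.atomsOf ∪ G.atomsOf
  | .imp F G => F.atomsOf ∪ G.atomsOf
  | .all _ F => F.atomsOf
  | .ex _ F => F.atomsOf

def Fml.isNegativeB : Fml C P ar → Bool
  | .atom _ _ => false
  | .eq _ _ => true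
  | .bot => true
  | .and F G => F.isNegativeB && G.isNegativeB
  | .or F G => F.isNegativeB && G.isNegativeB
  | .imp _ G => G.isNegativeB
  | .all _ F => F.isNegativeB
  | .ex _ F => F.isNegativeB

/-- A formula is negative if every occurrence of every predicate constant in it
belongs to the antecedent of an implication. -/
def Fml.isNegative (F : Fml C P ar) : Prop := F.isNegativeB = true

/-- Atoms with a strictly positive occurrence. -/
def Fml.spAtoms : Fml C P ar → Set (Atom C P ar)
  | .atom p t => {⟨p, t⟩}
  | .eq _ _ => ∅
  | .bot => ∅
  | .and F G => F.spAtoms ∪ G.spAtoms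
  | .or F G => F.spAtoms ∪ G.spAtoms
  | .imp _ G => G.spAtoms
  | .all _ F => F.spAtoms
  | .ex _ F => F.spAtoms

/-- Implications `G → H` with a strictly positive occurrence. -/
def Fml.spImps : Fml C P ar → Set (Fml C P ar × Fml C P ar)
  | .atom _ _ => ∅
  | .eq _ _ => ∅
  | .bot => ∅
  | .and F G => F.spImps ∪ G.spImps
  | .or F G => F.spImps ∪ G.spImps
  | .imp F G => insert (F, G) G.spImps
  | .all _ F => F.spImps
  | .ex _ F => F.spImps

/-- Atoms with an occurrence of polarity `b` (`true` = positive) that does not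
belong to any occurrence of a negative subformula. -/
def Fml.polNN : Bool → Fml C P ar → Set (Atom C P ar)
  | true, .atom p t => {⟨p, t⟩}
  | false, .atom _ _ => ∅
  | _, .eq _ _ => ∅
  | _, .bot => ∅
  | b, .and F G =>
      if (Fml.and F G).isNegativeB then ∅ else Fml.polNN b F ∪ Fml.polNN b G
  | b, .or F G =>
      if (Fml.or F G).isNegativeB then ∅ else Fml.polNN b F ∪ Fml.polNN b G
  | b, .imp F G =>
      if (Fml.imp F G).isNegativeB then ∅ else Fml.polNN (!b) F ∪ Fml.polNN b G
  | b, .all x F => if (Fml.all x F).isNegativeB then ∅ else Fml.polNN b F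
  | b, .ex x F => if (Fml.ex x F).isNegativeB then ∅ else Fml.polNN b F

/-- `a` depends on `b` in `F`: `a` weakly depends on `b` in an implication that has a
strictly positive occurrence in `F`. -/
def Fml.depends (F : Fml C P ar) (a b : Atom C P ar) : Prop :=
  ∃ GH ∈ F.spImps, a ∈ (Prod.snd GH).spAtoms ∧ b ∈ Fml.polNN true (Prod.fst GH)

/-- `E_F(v,u)`. -/
def satE (cI : C → D) (F : Fml C P ar) (vI uI : PredI P ar D) : Prop :=
  ∃ a b : Atom C P ar, F.depends a b ∧ ∃ θ : ℕ → D,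
    vI a.1 (fun i => (a.2 i).eval cI θ) ∧ uI b.1 (fun i => (b.2 i).eval cI θ) ∧
      ¬ vI b.1 (fun i => (b.2 i).eval cI θ)

/-- `SC_F(u)` : Nonempty(u) ∧ ∀v((v < u) ∧ Nonempty(v) → E_F(v,u)). -/
def satSC (cI : C → D) (F : Fml C P ar) (uI : PredI P ar D) : Prop :=
  PredI.nonemp uI ∧
    ∀ vI : PredI P ar D, PredI.lt vI uI → PredI.nonemp vI → satE cI F vI uI

/-- `Loop_F(u)` : SC_F(u) ∨ (Nonempty(u) ∧ ∀v((v ≤ u) ∧ SC_F(v) → E_F(v,u))). -/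
def satLoopF (cI : C → D) (F : Fml C P ar) (uI : PredI P ar D) : Prop :=
  satSC cI F uI ∨ (PredI.nonemp uI ∧
    ∀ vI : PredI P ar D, PredI.le vI uI → satSC cI F vI → satE cI F vI uI)

/-- Semantic atoms `pᵢ(ξ⃗*)`, where `ξ⃗` is a tuple of universe elements. -/
abbrev SAtom (P : Type) (ar : P → ℕ) (D : Type) := Σ p : P, Fin (ar p) → D

/-- Edges of the dependency graph of `F` w.r.t. an interpretation. -/
def edgeWrt (cI : C → D) (F : Fml C P ar) (a b : SAtom P ar D) : Prop :=
  ∃ a0 b0 : Atom C P ar, F.depends a0 b0 ∧ ∃ θ : ℕ → D,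
    (⟨a0.1, fun i => (a0.2 i).eval cI θ⟩ : SAtom P ar D) = a ∧
    (⟨b0.1, fun i => (b0.2 i).eval cI θ⟩ : SAtom P ar D) = b

/-- The subgraph induced by `Y` is strongly connected. -/
def SCin {V : Type} (E : V → V → Prop) (Y : Set V) : Prop :=
  ∀ a ∈ Y, ∀ b ∈ Y, Relation.ReflTransGen (fun x y => x ∈ Y ∧ y ∈ Y ∧ E x y) a b

/-- A loop of `F` w.r.t. `I`: nonempty (possibly infinite) set of semantic atoms
inducing a strongly connected subgraph of the dependency graph of `F` w.r.t. `I`. -/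
def isLoopWrt (cI : C → D) (F : Fml C P ar) (Y : Set (SAtom P ar D)) : Prop :=
  Y.Nonempty ∧ SCin (edgeWrt cI F) Y

/-- An unbounded set of `F` w.r.t. `I`. -/
def isUnboundedWrt (cI : C → D) (F : Fml C P ar) (Y : Set (SAtom P ar D)) : Prop :=
  Y.Nonempty ∧ ∀ Z ⊆ Y, Z.Nonempty → SCin (edgeWrt cI F) Z →
    ∃ a ∈ Z, ∃ b ∈ Y \ Z, edgeWrt cI F a b

/-- An extended loop of `F` w.r.t. `I`: a loop or an unbounded set. -/
def isExtLoopWrt (cI : C → D) (F : Fml C P ar) (Y : Set (SAtom P ar D)) : Prop :=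
  isLoopWrt cI F Y ∨ isUnboundedWrt cI F Y

/-- Edges of the first-order dependency graph of `F`. -/
def foEdge (F : Fml C P ar) (a b : Atom C P ar) : Prop :=
  ∃ a0 b0 : Atom C P ar, F.depends a0 b0 ∧ ∃ θ : ℕ → Term C,
    a0.subst θ = a ∧ b0.subst θ = b

/-- A first-order loop of `F`. -/
def isFOLoop (F : Fml C P ar) (Y : Set (Atom C P ar)) : Prop :=
  Y.Finite ∧ Y.Nonempty ∧ SCin (foEdge F) Y

/-- Normal form: no object constants occur in strictly positive occurrences of atoms. -/
def Fml.normalForm (F : Fml C P ar) : Prop :=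
  ∀ a ∈ F.spAtoms, ∀ i, (a.2 i).isVar

/-- `Y₁` subsumes `Y₂`. -/
def subsumes (Y₁ Y₂ : Set (Atom C P ar)) : Prop :=
  ∃ θ : ℕ → Term C, Atom.subst θ '' Y₁ = Y₂

/-- Satisfaction of `NFES_F(Y)`; the terms of the atoms in `Y` are evaluated under the
outer valuation `w` (implementing the renaming of the bound variables of `F` apart
from `Y`), the terms of `F` under the current valuation `v`. -/
def Fml.satNFES (cI : C → D) (pI : PredI P ar D) (Y : Set (Atom C P ar)) (w : ℕ → D) :
    Fml C P ar → (ℕ → D) → Prop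
  | .atom p t, v => pI p (fun i => (t i).eval cI v) ∧
      ∀ t' : Fin (ar p) → Term C, (⟨p, t'⟩ : Atom C P ar) ∈ Y →
        ¬ ∀ i, (t i).eval cI v = (t' i).eval cI w
  | .eq t₁ t₂, v => t₁.eval cI v = t₂.eval cI v
  | .bot, _ => False
  | .and F G, v => F.satNFES cI pI Y w v ∧ G.satNFES cI pI Y w v
  | .or F G, v => F.satNFES cI pI Y w v ∨ G.satNFES cI pI Y w v
  | .imp F G, v =>
      (F.satNFES cI pI Y w v → G.satNFES cI pI Y w v) ∧ (F.sat cI pI v → G.sat cI pI v)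
  | .all x F, v => ∀ d : D, F.satNFES cI pI Y w (Function.update v x d)
  | .ex x F, v => ∃ d : D, F.satNFES cI pI Y w (Function.update v x d)

/-- Truth of an atom of `Y` under valuation `w`. -/
def Atom.holds (cI : C → D) (pI : PredI P ar D) (w : ℕ → D) (a : Atom C P ar) : Prop :=
  pI a.1 (fun i => (a.2 i).eval cI w)

/-- `I ⊨ FLF_F(Y)` : the universal closure (over the variables of `Y`) of
`⋀Y → ¬NFES_F(Y)`. -/
def satFLF (cI : C → D) (pI : PredI P ar D) (F : Fml C P ar) (Y : Set (Atom C P ar)) : Prop :=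
  ∀ w : ℕ → D, (∀ a ∈ Y, a.holds cI pI w) → ¬ F.satNFES cI pI Y w w

/-- Restricted variables `RV(F)`. -/
def Fml.RV : Fml C P ar → Set ℕ
  | .atom _ t => ⋃ i, (t i).vars
  | .eq (.var _) (.var _) => ∅
  | .eq t₁ t₂ => t₁.vars ∪ t₂.vars
  | .bot => ∅
  | .and F G => F.RV ∪ G.RV
  | .or F G => F.RV ∩ G.RV
  | .imp _ _ => ∅
  | .all x F => F.RV \ {x}
  | .ex x F => F.RV \ {x}

/-- The unsafe variables of `F`: variables with an occurrence not in `∀x`, `∃x`, nor in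
any subformula `G → H` with `x ∈ RV(G)`. -/
def Fml.unsafeVars : Fml C P ar → Set ℕ
  | .atom _ t => ⋃ i, (t i).vars
  | .eq t₁ t₂ => t₁.vars ∪ t₂.vars
  | .bot => ∅
  | .and F G => F.unsafeVars ∪ G.unsafeVars
  | .or F G => F.unsafeVars ∪ G.unsafeVars
  | .imp F G => (F.unsafeVars ∪ G.unsafeVars) \ F.RV
  | .all _ F => F.unsafeVars
  | .ex _ F => F.unsafeVars

/-- `I ⊨ U_F`. -/
def satU (cI : C → D) (pI : PredI P ar D) (F : Fml C P ar) : Prop :=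
  ∀ p : P, ∀ xs : Fin (ar p) → D, pI p xs → ∀ i, ∃ c ∈ F.consts, xs i = cI c

/-! ### Logic programs -/

def Term.varList : Term C → List ℕ
  | .var x => [x]
  | .const _ => []

def Fml.freeList : Fml C P ar → List ℕ
  | .atom p t => (List.finRange (ar p)).foldr (fun i l => (t i).varList ++ l) []
  | .eq t₁ t₂ => t₁.varList ++ t₂.varList
  | .bot => []
  | .and F G => F.freeList ++ G.freeList
  | .or F G => F.freeList ++ G.freeList
  | .imp F G => F.freeList ++ G.freeList
  | .all x F => F.freeList.filter (· ≠ x)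
  | .ex x F => F.freeList.filter (· ≠ x)

/-- Universal closure. -/
def Fml.closure (F : Fml C P ar) : Fml C P ar := F.freeList.foldr Fml.all F

def Fml.top : Fml C P ar := Fml.imp Fml.bot Fml.bot

def Atom.toFml (a : Atom C P ar) : Fml C P ar := Fml.atom a.1 a.2

/-- A nondisjunctive rule `A ← B, N` (`N` is required to be a negative formula
in the statements below). -/
structure NRule (C P : Type) (ar : P → ℕ) where
  head : Atom C P ar
  body : List (Atom C P ar)
  neg : Fml C P ar

/-- A nondisjunctive program. -/
abbrev NProg (C P : Type) (ar : P → ℕ) := List (NRule C P ar)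

def NRule.toFml (r : NRule C P ar) : Fml C P ar :=
  Fml.imp (r.body.foldr (fun a G => (Atom.toFml a).and G) r.neg) (Atom.toFml r.head)

/-- FOL-representation of a nondisjunctive program. -/
def NProg.toFml (Pr : NProg C P ar) : Fml C P ar :=
  Pr.foldr (fun r G => (Fml.closure (NRule.toFml r)).and G) Fml.top

/-- Terms occurring in `Y`. -/
def termsOf (Y : Set (Atom C P ar)) : Set (Term C) := {t | ∃ a ∈ Y, ∃ i, a.2 i = t}

def NRule.headVars (r : NRule C P ar) : Set ℕ := Atom.vars r.head

/-- One disjunct of `FES_Π(Y)`, evaluated under the valuation `w` of the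
variables of `Y` (the variables of the rule are implicitly renamed apart from `Y`:
they are interpreted by the existential valuation `s`, while terms of `Y` and the
`θ`-images of head variables are evaluated under `w`). -/
def NRule.FES (cI : C → D) (pI : PredI P ar D) (r : NRule C P ar)
    (Y : Set (Atom C P ar)) (w : ℕ → D) : Prop :=
  ∃ θ : ℕ → Option (Term C),
    (∀ x ∈ NRule.headVars r, ∃ t ∈ termsOf Y, θ x = some t) ∧
    (∀ x, x ∉ NRule.headVars r → θ x = none) ∧
    Atom.subst (fun x => (θ x).getD (Term.var x)) r.head ∈ Y ∧
    ∃ s : ℕ → D,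
      let v : ℕ → D := fun x => match θ x with
        | some t => t.eval cI w
        | none => s x
      (∀ b ∈ r.body, pI b.1 (fun i => (b.2 i).eval cI v)) ∧
      (NRule.neg r).sat cI pI v ∧
      (∀ b ∈ r.body, ∀ t' : Fin (ar b.1) → Term C, (⟨b.1, t'⟩ : Atom C P ar) ∈ Y →
        ¬ ∀ i, (b.2 i).eval cI v = (t' i).eval cI w)

/-- `FES_Π(Y)` under valuation `w`. -/
def NProg.FES (cI : C → D) (pI : PredI P ar D) (Pr : NProg C P ar)
    (Y : Set (Atom C P ar)) (w : ℕ → D) : Prop :=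
  ∃ r ∈ Pr, NRule.FES cI pI r Y w

/-- `I ⊨ FLF_Π(Y)`. -/
def NProg.satFLF (cI : C → D) (pI : PredI P ar D) (Pr : NProg C P ar)
    (Y : Set (Atom C P ar)) : Prop :=
  ∀ w : ℕ → D, (∀ a ∈ Y, Atom.holds cI pI w a) → NProg.FES cI pI Pr Y w

/-- `p(t)` depends on `q(t')` in the program `Pr`. -/
def NProg.depends (Pr : NProg C P ar) (a b : Atom C P ar) : Prop :=
  ∃ r ∈ Pr, NRule.head r = a ∧ b ∈ NRule.body r

/-- Edges of the first-order dependency graph of a nondisjunctive program. -/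
def NProg.foEdge (Pr : NProg C P ar) (a b : Atom C P ar) : Prop :=
  ∃ a0 b0 : Atom C P ar, NProg.depends Pr a0 b0 ∧ ∃ θ : ℕ → Term C,
    a0.subst θ = a ∧ b0.subst θ = b

/-- First-order loops of a nondisjunctive program. -/
def NProg.isFOLoop (Pr : NProg C P ar) (Y : Set (Atom C P ar)) : Prop :=
  Y.Finite ∧ Y.Nonempty ∧ SCin (NProg.foEdge Pr) Y

/-! ### Grounding (Herbrand universe `C`, constants denote themselves) -/

/-- Ground atoms of `σ(Π)^g`. -/
abbrev GAtom (C P : Type) (ar : P → ℕ) := Σ p : P, Fin (ar p) → C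

/-- The ground instance of an atom under an assignment of constants to variables. -/
def Atom.ground (v : ℕ → C) (a : Atom C P ar) : GAtom C P ar :=
  ⟨a.1, fun i => (a.2 i).eval id v⟩

/-- `I ⊨ LF_{Ground(Π)}(Y)` for a set `Y` of ground atoms and an Herbrand
interpretation given by `pI`. -/
def NProg.satLFg (pI : PredI P ar C) (Pr : NProg C P ar) (Y : Set (GAtom C P ar)) : Prop :=
  (∀ a ∈ Y, pI a.1 a.2) → ∃ r ∈ Pr, ∃ v : ℕ → C,
    Atom.ground v (NRule.head r) ∈ Y ∧
    (∀ b ∈ NRule.body r, Atom.ground v b ∉ Y) ∧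
    (∀ b ∈ NRule.body r, pI b.1 (fun i => (b.2 i).eval id v)) ∧
    (NRule.neg r).sat id pI v

/-- Edges of the dependency graph of `Ground(Π)`. -/
def NProg.gEdge (Pr : NProg C P ar) (a b : GAtom C P ar) : Prop :=
  ∃ r ∈ Pr, ∃ v : ℕ → C,
    Atom.ground v (NRule.head r) = a ∧ ∃ b0 ∈ NRule.body r, Atom.ground v b0 = b

/-- Loops of `Ground(Π)`. -/
def NProg.gLoop (Pr : NProg C P ar) (Y : Set (GAtom C P ar)) : Prop :=
  Y.Nonempty ∧ SCin (NProg.gEdge Pr) Y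

/-- A ground atom occurs in `Ground(Π)`. -/
def NProg.occursInGround (Pr : NProg C P ar) (a : GAtom C P ar) : Prop :=
  ∃ r ∈ Pr, ∃ v : ℕ → C,
    Atom.ground v (NRule.head r) = a ∨ (∃ b ∈ NRule.body r, Atom.ground v b = a) ∨
      ∃ a0 ∈ (NRule.neg r).atomsOf, Atom.ground v a0 = a

/-! ### Disjunctive programs -/

/-- A disjunctive rule `A ← B, N`. -/
structure DRule (C P : Type) (ar : P → ℕ) where
  head : List (Atom C P ar)
  body : List (Atom C P ar)
  neg : Fml C P ar

abbrev DProg (C P : Type) (ar : P → ℕ) := List (DRule C P ar)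

def DRule.toFml (r : DRule C P ar) : Fml C P ar :=
  Fml.imp (r.body.foldr (fun a G => (Atom.toFml a).and G) r.neg)
    (r.head.foldr (fun a G => (Atom.toFml a).or G) Fml.bot)

def DProg.toFml (Pr : DProg C P ar) : Fml C P ar :=
  Pr.foldr (fun r G => (Fml.closure (DRule.toFml r)).and G) Fml.top

def DRule.headVars (r : DRule C P ar) : Set ℕ :=
  {x | ∃ a ∈ r.head, ∃ i, a.2 i = Term.var x}

/-- One disjunct of the disjunctive `FES_Π(Y)` under valuation `w`
(`θ x = none` means `θ` maps `x` to itself). -/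
def DRule.FES (cI : C → D) (pI : PredI P ar D) (r : DRule C P ar)
    (Y : Set (Atom C P ar)) (w : ℕ → D) : Prop :=
  ∃ θ : ℕ → Option (Term C),
    (∀ x t, θ x = some t → x ∈ DRule.headVars r ∧ t ∈ termsOf Y) ∧
    (∃ a ∈ r.head, Atom.subst (fun x => (θ x).getD (Term.var x)) a ∈ Y) ∧
    ∃ s : ℕ → D,
      let v : ℕ → D := fun x => match θ x with
        | some t => t.eval cI w
        | none => s x
      (∀ b ∈ r.body, pI b.1 (fun i => (b.2 i).eval cI v)) ∧
      (DRule.neg r).sat cI pI v ∧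
      (∀ b ∈ r.body, ∀ t' : Fin (ar b.1) → Term C, (⟨b.1, t'⟩ : Atom C P ar) ∈ Y →
        ¬ ∀ i, (b.2 i).eval cI v = (t' i).eval cI w) ∧
      ¬ ∃ a ∈ r.head, pI a.1 (fun i => (a.2 i).eval cI v) ∧
          ∀ t' : Fin (ar a.1) → Term C, (⟨a.1, t'⟩ : Atom C P ar) ∈ Y →
            ¬ ∀ i, (a.2 i).eval cI v = (t' i).eval cI w

def DProg.FES (cI : C → D) (pI : PredI P ar D) (Pr : DProg C P ar)
    (Y : Set (Atom C P ar)) (w : ℕ → D) : Prop :=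
  ∃ r ∈ Pr, DRule.FES cI pI r Y w

/-! ### Extended programs -/

/-- Every occurrence of an implication belongs to (an occurrence of) a negative formula. -/
def Fml.impsProtected : Fml C P ar → Prop
  | .atom _ _ => True
  | .eq _ _ => True
  | .bot => True
  | .and F G => (Fml.and F G).isNegative ∨ (F.impsProtected ∧ G.impsProtected)
  | .or F G => (Fml.or F G).isNegative ∨ (F.impsProtected ∧ G.impsProtected)
  | .imp F G => (Fml.imp F G).isNegative
  | .all x F => (Fml.all x F).isNegative ∨ F.impsProtected
  | .ex x F => (Fml.ex x F).isNegative ∨ F.impsProtected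

/-- An extended rule `H ← G`. -/
structure ERule (C P : Type) (ar : P → ℕ) where
  head : Fml C P ar
  body : Fml C P ar

abbrev EProg (C P : Type) (ar : P → ℕ) := List (ERule C P ar)

def ERule.toFml (r : ERule C P ar) : Fml C P ar := Fml.imp r.body r.head

def EProg.toFml (Pr : EProg C P ar) : Fml C P ar :=
  Pr.foldr (fun r G => (Fml.closure (ERule.toFml r)).and G) Fml.top

/-- One disjunct of `EFES_Π(Y)` under valuation `w`: the rule head contains a strictly
positive occurrence of a predicate constant occurring in an atom of `Y`, and
`∃z(NFES_G(Y) ∧ ¬NFES_H(Y))`. -/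
def ERule.EFES (cI : C → D) (pI : PredI P ar D) (r : ERule C P ar)
    (Y : Set (Atom C P ar)) (w : ℕ → D) : Prop :=
  (∃ p : P, (∃ t, (⟨p, t⟩ : Atom C P ar) ∈ (ERule.head r).spAtoms) ∧
      ∃ t', (⟨p, t'⟩ : Atom C P ar) ∈ Y) ∧
  ∃ s : ℕ → D, (ERule.body r).satNFES cI pI Y w s ∧ ¬ (ERule.head r).satNFES cI pI Y w s

def EProg.EFES (cI : C → D) (pI : PredI P ar D) (Pr : EProg C P ar)
    (Y : Set (Atom C P ar)) (w : ℕ → D) : Prop :=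
  ∃ r ∈ Pr, ERule.EFES cI pI r Y w

/-- A disjunctive rule viewed as an extended rule. -/
def DRule.toERule (r : DRule C P ar) : ERule C P ar :=
  ⟨r.head.foldr (fun a G => (Atom.toFml a).or G) Fml.bot,
   r.body.foldr (fun a G => (Atom.toFml a).and G) r.neg⟩


/-! In a finite model, `F*(u)` for some `u < p` is witnessed by the finite set `S` of
ground atoms true in `p` but false in `u`. Writing the atoms of `S` with pairwise distinct
variables gives a finite set `Y` and a valuation `w` such that `NFES_F(Y)` under `w` is exactly `F*(u)`,
because `u` is `p` with the instances of `Y` under `w` removed. Conversely, for every `Y` and `w`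
making `⋀Y` true, that interpretation is strictly below `p`, so `NFES_F(Y)` contradicts `SM[F]`. -/

lemma Term.eval_congr {cI : C → D} {v v' : ℕ → D} {t : Term C}
    (h : ∀ x ∈ t.vars, v x = v' x) : t.eval cI v = t.eval cI v' := by
  cases t with
  | var x => exact h x rfl
  | const c => rfl

lemma Function.update_eqOn_of_eqOn_diff {v v' : ℕ → D} {s : Set ℕ} {x : ℕ} (d : D)
    (h : ∀ y ∈ s \ {x}, v y = v' y) :
    ∀ y ∈ s, Function.update v x d y = Function.update v' x d y := by
  intro y hy
  rcases eq_or_ne y x with rfl | hne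
  · simp only [Function.update_self]
  · simp only [Function.update_of_ne hne]
    exact h y ⟨hy, hne⟩

lemma Term.eval_tuple_congr {n : ℕ} {cI : C → D} {v v' : ℕ → D} {t : Fin n → Term C}
    (h : ∀ x ∈ ⋃ i, (t i).vars, v x = v' x) :
    (fun i => (t i).eval cI v) = fun i => (t i).eval cI v' :=
  funext fun i => Term.eval_congr fun x hx => h x (Set.mem_iUnion.mpr ⟨i, hx⟩)

lemma Fml.sat_congr {cI : C → D} {pI : PredI P ar D} (F : Fml C P ar)
    {v v' : ℕ → D} (hv : ∀ x ∈ F.freeVars, v x = v' x) :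
    F.sat cI pI v ↔ F.sat cI pI v' := by
  induction F generalizing v v' with
  | atom p t => simp only [Fml.sat, Term.eval_tuple_congr hv]
  | eq t₁ t₂ =>
    simp only [Fml.sat, Term.eval_congr fun x hx => hv x (Or.inl hx),
      Term.eval_congr fun x hx => hv x (Or.inr hx)]
  | bot => exact Iff.rfl
  | and F G ihF ihG =>
    exact and_congr (ihF fun x hx => hv x (Or.inl hx)) (ihG fun x hx => hv x (Or.inr hx))
  | or F G ihF ihG =>
    exact or_congr (ihF fun x hx => hv x (Or.inl hx)) (ihG fun x hx => hv x (Or.inr hx))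
  | imp F G ihF ihG =>
    exact imp_congr (ihF fun x hx => hv x (Or.inl hx)) (ihG fun x hx => hv x (Or.inr hx))
  | all x F ih => exact forall_congr' fun d => ih (Function.update_eqOn_of_eqOn_diff d hv)
  | ex x F ih => exact exists_congr fun d => ih (Function.update_eqOn_of_eqOn_diff d hv)

lemma Fml.satStar_congr {cI : C → D} {pI uI : PredI P ar D} (F : Fml C P ar)
    {v v' : ℕ → D} (hv : ∀ x ∈ F.freeVars, v x = v' x) :
    F.satStar cI pI uI v ↔ F.satStar cI pI uI v' := by
  induction F generalizing v v' with
  | atom p t => simp only [Fml.satStar, Term.eval_tuple_congr hv]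
  | eq t₁ t₂ =>
    simp only [Fml.satStar, Term.eval_congr fun x hx => hv x (Or.inl hx),
      Term.eval_congr fun x hx => hv x (Or.inr hx)]
  | bot => exact Iff.rfl
  | and F G ihF ihG =>
    exact and_congr (ihF fun x hx => hv x (Or.inl hx)) (ihG fun x hx => hv x (Or.inr hx))
  | or F G ihF ihG =>
    exact or_congr (ihF fun x hx => hv x (Or.inl hx)) (ihG fun x hx => hv x (Or.inr hx))
  | imp F G ihF ihG =>
    exact and_congr
      (imp_congr (ihF fun x hx => hv x (Or.inl hx)) (ihG fun x hx => hv x (Or.inr hx)))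
      (imp_congr (F.sat_congr fun x hx => hv x (Or.inl hx))
        (G.sat_congr fun x hx => hv x (Or.inr hx)))
  | all x F ih => exact forall_congr' fun d => ih (Function.update_eqOn_of_eqOn_diff d hv)
  | ex x F ih => exact exists_congr fun d => ih (Function.update_eqOn_of_eqOn_diff d hv)

lemma Fml.satStar_of_freeVars_eq_empty {cI : C → D} {pI uI : PredI P ar D} {F : Fml C P ar}
    (hF : F.freeVars = ∅) {v : ℕ → D} (h : F.satStar cI pI uI v) (v' : ℕ → D) :
    F.satStar cI pI uI v' :=
  (F.satStar_congr fun x hx => absurd (hF ▸ hx) (Set.notMem_empty x)).mp h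

lemma Fml.preds_finite (F : Fml C P ar) : F.preds.Finite := by
  induction F with
  | atom p t => exact Set.finite_singleton _
  | eq _ _ | bot => exact Set.finite_empty
  | and F G ihF ihG | or F G ihF ihG | imp F G ihF ihG => exact ihF.union ihG
  | all x F ih | ex x F ih => exact ih

def Atom.denote (cI : C → D) (w : ℕ → D) (a : Atom C P ar) : SAtom P ar D :=
  ⟨a.1, fun i => (a.2 i).eval cI w⟩

def PredI.withoutInstances (pI : PredI P ar D) (cI : C → D) (Y : Set (Atom C P ar))
    (w : ℕ → D) : PredI P ar D :=
  fun p xs => pI p xs ∧ ∀ t' : Fin (ar p) → Term C,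
    (⟨p, t'⟩ : Atom C P ar) ∈ Y → ¬ ∀ i, xs i = (t' i).eval cI w

lemma PredI.withoutInstances_iff {pI : PredI P ar D} {cI : C → D} {Y : Set (Atom C P ar)}
    {w : ℕ → D} {p : P} {xs : Fin (ar p) → D} :
    pI.withoutInstances cI Y w p xs ↔ pI p xs ∧ ⟨p, xs⟩ ∉ Atom.denote cI w '' Y := by
  refine and_congr_right fun _ => ⟨?_, ?_⟩
  · rintro h ⟨⟨q, t'⟩, ha, heq⟩
    obtain ⟨rfl, hxs⟩ := Sigma.mk.inj_iff.mp heq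
    exact h t' ha fun i => congrFun (eq_of_heq hxs).symm i
  · intro h t' ha hxs
    exact h ⟨⟨p, t'⟩, ha, by rw [Atom.denote, ← funext hxs]⟩

lemma PredI.withoutInstances_lt {pI : PredI P ar D} {cI : C → D} {Y : Set (Atom C P ar)}
    {w : ℕ → D} (hY : Y.Nonempty) (hholds : ∀ a ∈ Y, a.holds cI pI w) :
    (pI.withoutInstances cI Y w).lt pI := by
  refine ⟨fun p xs h => h.1, fun heqv => ?_⟩
  obtain ⟨a, ha⟩ := hY
  exact ((heqv a.1 _).mpr (hholds a ha)).2 a.2 ha fun _ => rfl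

lemma Fml.satNFES_iff_satStar {cI : C → D} {pI : PredI P ar D}
    {Y : Set (Atom C P ar)} {w : ℕ → D} (F : Fml C P ar) (v : ℕ → D) :
    F.satNFES cI pI Y w v ↔ F.satStar cI pI (pI.withoutInstances cI Y w) v := by
  induction F generalizing v with
  | atom p t | eq t₁ t₂ | bot => exact Iff.rfl
  | and F G ihF ihG => exact and_congr (ihF v) (ihG v)
  | or F G ihF ihG => exact or_congr (ihF v) (ihG v)
  | imp F G ihF ihG => exact and_congr (imp_congr (ihF v) (ihG v)) Iff.rfl
  | all x F ih => exact forall_congr' fun d => ih _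
  | ex x F ih => exact exists_congr fun d => ih _

lemma exists_varAtoms_denoting [Nonempty D] [Countable (SAtom P ar D)] (cI : C → D) :
    ∃ (A : SAtom P ar D → Atom C P ar) (w : ℕ → D),
      ∀ s, (∀ i, ((A s).2 i).isVar) ∧ (A s).denote cI w = s := by
  obtain ⟨e, he⟩ := Countable.exists_injective_nat (Σ s : SAtom P ar D, Fin (ar s.1))
  refine ⟨fun s => ⟨s.1, fun i => .var (e ⟨s, i⟩)⟩,
    Function.extend e (fun q => q.1.2 q.2) fun _ => Classical.arbitrary D,
    fun s => ⟨fun _ => trivial, ?_⟩⟩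
  simp only [Atom.denote, Term.eval, he.extend_apply]

lemma PredI.exists_withoutInstances_eq_of_lt [Nonempty D] [Finite (SAtom P ar D)]
    (cI : C → D) {pI uI : PredI P ar D} (hlt : uI.lt pI) :
    ∃ Y : Set (Atom C P ar), Y.Finite ∧ Y.Nonempty ∧ (∀ a ∈ Y, ∀ i, (a.2 i).isVar) ∧
      ∃ w, (∀ a ∈ Y, a.holds cI pI w) ∧ pI.withoutInstances cI Y w = uI := by
  obtain ⟨hle, hne⟩ := hlt
  set S : Set (SAtom P ar D) := {s | pI s.1 s.2 ∧ ¬ uI s.1 s.2}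
  have hS : S.Nonempty := by
    by_contra hS
    exact hne fun p xs => ⟨hle p xs, fun hp => by_contra fun hu => hS ⟨⟨p, xs⟩, hp, hu⟩⟩
  obtain ⟨A, w, hA⟩ := exists_varAtoms_denoting (C := C) (ar := ar) cI
  have hdenote : Atom.denote cI w '' (A '' S) = S := by
    rw [Set.image_image]
    simp only [fun s => (hA s).2, Set.image_id']
  refine ⟨A '' S, S.toFinite.image A, hS.image A, ?_, w, ?_, ?_⟩
  · rintro _ ⟨s, -, rfl⟩
    exact (hA s).1
  · rintro _ ⟨s, hs, rfl⟩
    change pI (Atom.denote cI w (A s)).1 (Atom.denote cI w (A s)).2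
    rw [(hA s).2]
    exact hs.1
  · funext p xs
    rw [PredI.withoutInstances_iff, hdenote, eq_iff_iff]
    exact ⟨fun ⟨hp, hS⟩ => by_contra fun hu => hS ⟨hp, hu⟩, fun hu => ⟨hle p xs hu, fun h => h.2 hu⟩⟩

lemma satFLF_of_satSM {cI : C → D} {pI : PredI P ar D} {F : Fml C P ar}
    (hsent : F.freeVars = ∅) (hSM : satSM cI pI F) {Y : Set (Atom C P ar)} (hY : Y.Nonempty) :
    satFLF cI pI F Y := by
  intro w hholds hNFES
  rw [Fml.satNFES_iff_satStar] at hNFES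
  exact hSM.2 ⟨_, PredI.withoutInstances_lt hY hholds,
    Fml.satStar_of_freeVars_eq_empty hsent hNFES⟩

/-- Proposition 4, (a) ⇔ (b): for a model `I` of a sentence `F` with finite
universe, `I ⊨ SM[F]` iff `I ⊨ FLF_F(Y)` for every nonempty finite set `Y` of atoms formed
from the predicate constants of `σ(F)` and variables. -/
theorem statement_5 {C P D : Type} {ar : P → ℕ} [Nonempty D]
    (cI : C → D) (pI : PredI P ar D) (F : Fml C P ar)
    (hfin : Finite D) (hsent : F.freeVars = ∅) (hpreds : ∀ p : P, p ∈ F.preds)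
    (hmodel : F.satSent cI pI) :
    satSM cI pI F ↔
      ∀ Y : Set (Atom C P ar), Y.Finite → Y.Nonempty →
        (∀ a ∈ Y, ∀ i, (a.2 i).isVar) → satFLF cI pI F Y := by
  refine ⟨fun hSM Y _ hY _ => satFLF_of_satSM hsent hSM hY, fun hFLF => ⟨hmodel, ?_⟩⟩
  rintro ⟨uI, hlt, hstar⟩
  have : Finite P := Set.finite_univ_iff.mp (F.preds_finite.subset fun p _ => hpreds p)
  obtain ⟨Y, hYfin, hY, hYvar, w, hholds, hYu⟩ := PredI.exists_withoutInstances_eq_of_lt cI hlt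
  refine hFLF Y hYfin hY hYvar w hholds ?_
  rw [Fml.satNFES_iff_satStar, hYu]
  exact hstar w

end SMLF
end

section
/- Let F be a first-order sentence in rectified form that has no function constants of positive arity. If F has no unsafe variables, then there is a finite collection Γ of finite sets of non-equality atoms such that SM[F] is equivalent to the conjunction of F, U_F, and the loop formulas FLF_F(Y) for all Y ∈ Γ; that is, an interpretation of σ(F) satisfies SM[F] if and only if it satisfies F, U_F, and FLF_F(Y) for every Y ∈ Γ. -/
set_option linter.unusedVariables false

namespace SMLF

variable {C P D : Type} {ar : P → ℕ}

section AuxProofs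

variable {C P D : Type} {ar : P → ℕ}

lemma term_eval_agree {cI : C → D} {v v' : ℕ → D} : ∀ {t : Term C},
    (∀ x ∈ t.vars, v x = v' x) → t.eval cI v = t.eval cI v'
  | .var x, h => h x rfl
  | .const _, _ => rfl

lemma sat_agree {cI : C → D} {pI : PredI P ar D} :
    ∀ (F : Fml C P ar) {v v' : ℕ → D}, (∀ x ∈ F.freeVars, v x = v' x) →
      (F.sat cI pI v ↔ F.sat cI pI v') := by
  intro F
  induction F with
  | atom p t =>
    intro v v' h
    simp only [Fml.sat]
    have he : (fun i => (t i).eval cI v) = fun i => (t i).eval cI v' :=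
      funext fun i => term_eval_agree (fun x hx => h x (Set.mem_iUnion.2 ⟨i, hx⟩))
    rw [he]
  | eq t₁ t₂ =>
    intro v v' h
    simp only [Fml.sat]
    rw [term_eval_agree (fun x hx => h x (Or.inl hx)),
        term_eval_agree (fun x hx => h x (Or.inr hx))]
  | bot => intro v v' h; exact Iff.rfl
  | and F G ihF ihG =>
    intro v v' h
    exact and_congr (ihF fun x hx => h x (Or.inl hx)) (ihG fun x hx => h x (Or.inr hx))
  | or F G ihF ihG =>
    intro v v' h
    exact or_congr (ihF fun x hx => h x (Or.inl hx)) (ihG fun x hx => h x (Or.inr hx))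
  | imp F G ihF ihG =>
    intro v v' h
    exact imp_congr (ihF fun x hx => h x (Or.inl hx)) (ihG fun x hx => h x (Or.inr hx))
  | all y F ih =>
    intro v v' h
    simp only [Fml.sat]
    refine forall_congr' fun d => ih fun x hx => ?_
    by_cases hxy : x = y
    · subst hxy; simp [Function.update_self]
    · rw [Function.update_of_ne hxy, Function.update_of_ne hxy]; exact h x ⟨hx, hxy⟩
  | ex y F ih =>
    intro v v' h
    simp only [Fml.sat]
    refine exists_congr fun d => ih fun x hx => ?_
    by_cases hxy : x = y
    · subst hxy; simp [Function.update_self]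
    · rw [Function.update_of_ne hxy, Function.update_of_ne hxy]; exact h x ⟨hx, hxy⟩

lemma satStar_agree {cI : C → D} {pI uI : PredI P ar D} :
    ∀ (F : Fml C P ar) {v v' : ℕ → D}, (∀ x ∈ F.freeVars, v x = v' x) →
      (F.satStar cI pI uI v ↔ F.satStar cI pI uI v') := by
  intro F
  induction F with
  | atom p t =>
    intro v v' h
    simp only [Fml.satStar]
    have he : (fun i => (t i).eval cI v) = fun i => (t i).eval cI v' :=
      funext fun i => term_eval_agree (fun x hx => h x (Set.mem_iUnion.2 ⟨i, hx⟩))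
    rw [he]
  | eq t₁ t₂ =>
    intro v v' h
    simp only [Fml.satStar]
    rw [term_eval_agree (fun x hx => h x (Or.inl hx)),
        term_eval_agree (fun x hx => h x (Or.inr hx))]
  | bot => intro v v' h; exact Iff.rfl
  | and F G ihF ihG =>
    intro v v' h
    exact and_congr (ihF fun x hx => h x (Or.inl hx)) (ihG fun x hx => h x (Or.inr hx))
  | or F G ihF ihG =>
    intro v v' h
    exact or_congr (ihF fun x hx => h x (Or.inl hx)) (ihG fun x hx => h x (Or.inr hx))
  | imp F G ihF ihG =>
    intro v v' h
    exact and_congr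
      (imp_congr (ihF fun x hx => h x (Or.inl hx)) (ihG fun x hx => h x (Or.inr hx)))
      (imp_congr (sat_agree F fun x hx => h x (Or.inl hx))
        (sat_agree G fun x hx => h x (Or.inr hx)))
  | all y F ih =>
    intro v v' h
    simp only [Fml.satStar]
    refine forall_congr' fun d => ih fun x hx => ?_
    by_cases hxy : x = y
    · subst hxy; simp [Function.update_self]
    · rw [Function.update_of_ne hxy, Function.update_of_ne hxy]; exact h x ⟨hx, hxy⟩
  | ex y F ih =>
    intro v v' h
    simp only [Fml.satStar]
    refine exists_congr fun d => ih fun x hx => ?_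
    by_cases hxy : x = y
    · subst hxy; simp [Function.update_self]
    · rw [Function.update_of_ne hxy, Function.update_of_ne hxy]; exact h x ⟨hx, hxy⟩

lemma satStar_sat {cI : C → D} {pI uI : PredI P ar D} (hle : ∀ p xs, uI p xs → pI p xs) :
    ∀ (F : Fml C P ar) (v : ℕ → D), F.satStar cI pI uI v → F.sat cI pI v := by
  intro F
  induction F with
  | atom p t => intro v h; exact hle _ _ h
  | eq t₁ t₂ => intro v h; exact h
  | bot => intro v h; exact h
  | and F G ihF ihG => intro v h; exact ⟨ihF v h.1, ihG v h.2⟩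
  | or F G ihF ihG =>
    intro v h; exact h.elim (fun h => Or.inl (ihF v h)) (fun h => Or.inr (ihG v h))
  | imp F G _ _ => intro v h; exact h.2
  | all y F ih => intro v h d; exact ih _ (h d)
  | ex y F ih => intro v h; obtain ⟨d, hd⟩ := h; exact ⟨d, ih _ hd⟩

lemma satNFES_iff (cI : C → D) (pI : PredI P ar D) (Y : Set (Atom C P ar)) (w : ℕ → D) :
    ∀ (F : Fml C P ar) (v : ℕ → D),
      F.satNFES cI pI Y w v ↔ F.satStar cI pI
        (fun p xs => pI p xs ∧ ∀ t', (⟨p, t'⟩ : Atom C P ar) ∈ Y →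
          ¬ ∀ i, xs i = (t' i).eval cI w) v := by
  intro F
  induction F with
  | atom p t => intro v; simp only [Fml.satNFES, Fml.satStar]
  | eq t₁ t₂ => intro v; exact Iff.rfl
  | bot => intro v; exact Iff.rfl
  | and F G ihF ihG => intro v; exact and_congr (ihF v) (ihG v)
  | or F G ihF ihG => intro v; exact or_congr (ihF v) (ihG v)
  | imp F G ihF ihG => intro v; exact and_congr (imp_congr (ihF v) (ihG v)) Iff.rfl
  | all y F ih => intro v; exact forall_congr' fun d => ih _
  | ex y F ih => intro v; exact exists_congr fun d => ih _

lemma unsafe_sub : ∀ (G : Fml C P ar), ∀ x ∈ G.unsafeVars,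
    x ∈ G.freeVars ∨ x ∈ G.quantVars := by
  intro G
  induction G with
  | atom p t => intro x hx; exact Or.inl hx
  | eq t₁ t₂ => intro x hx; exact Or.inl hx
  | bot => intro x hx; exact hx.elim
  | and F G ihF ihG =>
    intro x hx
    rcases hx with hx | hx
    · rcases ihF x hx with h | h
      · exact Or.inl (Or.inl h)
      · exact Or.inr (List.mem_append.2 (Or.inl h))
    · rcases ihG x hx with h | h
      · exact Or.inl (Or.inr h)
      · exact Or.inr (List.mem_append.2 (Or.inr h))
  | or F G ihF ihG =>
    intro x hx
    rcases hx with hx | hx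
    · rcases ihF x hx with h | h
      · exact Or.inl (Or.inl h)
      · exact Or.inr (List.mem_append.2 (Or.inl h))
    · rcases ihG x hx with h | h
      · exact Or.inl (Or.inr h)
      · exact Or.inr (List.mem_append.2 (Or.inr h))
  | imp F G ihF ihG =>
    intro x hx
    rcases hx.1 with h1 | h1
    · rcases ihF x h1 with h | h
      · exact Or.inl (Or.inl h)
      · exact Or.inr (List.mem_append.2 (Or.inl h))
    · rcases ihG x h1 with h | h
      · exact Or.inl (Or.inr h)
      · exact Or.inr (List.mem_append.2 (Or.inr h))
  | all y F ih =>
    intro x hx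
    rcases ih x hx with h | h
    · by_cases hxy : x = y
      · exact Or.inr (by rw [hxy]; exact List.mem_cons_self)
      · exact Or.inl ⟨h, hxy⟩
    · exact Or.inr (List.mem_cons_of_mem _ h)
  | ex y F ih =>
    intro x hx
    rcases ih x hx with h | h
    · by_cases hxy : x = y
      · exact Or.inr (by rw [hxy]; exact List.mem_cons_self)
      · exact Or.inl ⟨h, hxy⟩
    · exact Or.inr (List.mem_cons_of_mem _ h)

lemma RV_sub_free : ∀ (G : Fml C P ar), G.RV ⊆ G.freeVars := by
  intro G
  induction G with
  | atom p t => exact fun x hx => hx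
  | eq t₁ t₂ =>
    cases t₁ <;> cases t₂ <;>
      simp [Fml.RV, Fml.freeVars, Term.vars, Set.subset_def]
  | bot => exact fun x hx => hx.elim
  | and F G ihF ihG => exact Set.union_subset_union ihF ihG
  | or F G ihF ihG => exact fun x hx => Or.inl (ihF hx.1)
  | imp F G _ _ => exact fun x hx => hx.elim
  | all y F ih => exact Set.diff_subset_diff ih (subset_refl _)
  | ex y F ih => exact Set.diff_subset_diff ih (subset_refl _)

def nice : Fml C P ar → Prop
  | .and F G => nice F ∧ nice G
  | .or F G => nice F ∧ nice G
  | .imp F G => nice F ∧ nice G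
  | .all y F => nice F ∧ y ∉ F.unsafeVars
  | .ex y F => nice F ∧ y ∉ F.unsafeVars
  | _ => True

lemma nice_of : ∀ (G : Fml C P ar), G.quantVars.Nodup →
    (∀ x ∈ G.quantVars, x ∉ G.freeVars) → G.unsafeVars ⊆ G.freeVars → nice G := by
  intro G
  induction G with
  | atom p t => intro _ _ _; trivial
  | eq t₁ t₂ => intro _ _ _; trivial
  | bot => intro _ _ _; trivial
  | and F G ihF ihG =>
    intro hnd hqf hsub
    have hndF : F.quantVars.Nodup := ((List.nodup_append).mp hnd).1
    have hndG : G.quantVars.Nodup := ((List.nodup_append).mp hnd).2.1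
    have hF : F.unsafeVars ⊆ F.freeVars := by
      intro x hx
      have hfi : x ∈ (Fml.and F G).freeVars := hsub (Or.inl hx)
      rcases unsafe_sub F x hx with h | h
      · exact h
      · exact absurd hfi (hqf x (List.mem_append.2 (Or.inl h)))
    have hG : G.unsafeVars ⊆ G.freeVars := by
      intro x hx
      have hfi : x ∈ (Fml.and F G).freeVars := hsub (Or.inr hx)
      rcases unsafe_sub G x hx with h | h
      · exact h
      · exact absurd hfi (hqf x (List.mem_append.2 (Or.inr h)))
    exact ⟨ihF hndF (fun x hx hf => hqf x (List.mem_append.2 (Or.inl hx)) (Or.inl hf)) hF,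
           ihG hndG (fun x hx hf => hqf x (List.mem_append.2 (Or.inr hx)) (Or.inr hf)) hG⟩
  | or F G ihF ihG =>
    intro hnd hqf hsub
    have hndF : F.quantVars.Nodup := ((List.nodup_append).mp hnd).1
    have hndG : G.quantVars.Nodup := ((List.nodup_append).mp hnd).2.1
    have hF : F.unsafeVars ⊆ F.freeVars := by
      intro x hx
      have hfi : x ∈ (Fml.or F G).freeVars := hsub (Or.inl hx)
      rcases unsafe_sub F x hx with h | h
      · exact h
      · exact absurd hfi (hqf x (List.mem_append.2 (Or.inl h)))
    have hG : G.unsafeVars ⊆ G.freeVars := by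
      intro x hx
      have hfi : x ∈ (Fml.or F G).freeVars := hsub (Or.inr hx)
      rcases unsafe_sub G x hx with h | h
      · exact h
      · exact absurd hfi (hqf x (List.mem_append.2 (Or.inr h)))
    exact ⟨ihF hndF (fun x hx hf => hqf x (List.mem_append.2 (Or.inl hx)) (Or.inl hf)) hF,
           ihG hndG (fun x hx hf => hqf x (List.mem_append.2 (Or.inr hx)) (Or.inr hf)) hG⟩
  | imp F G ihF ihG =>
    intro hnd hqf hsub
    have hndF : F.quantVars.Nodup := ((List.nodup_append).mp hnd).1
    have hndG : G.quantVars.Nodup := ((List.nodup_append).mp hnd).2.1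
    have hF : F.unsafeVars ⊆ F.freeVars := by
      intro x hx
      by_cases hr : x ∈ F.RV
      · exact RV_sub_free F hr
      · have hfi : x ∈ (Fml.imp F G).freeVars := hsub ⟨Or.inl hx, hr⟩
        rcases unsafe_sub F x hx with h | h
        · exact h
        · exact absurd hfi (hqf x (List.mem_append.2 (Or.inl h)))
    have hG : G.unsafeVars ⊆ G.freeVars := by
      intro x hx
      have hfi : x ∈ (Fml.imp F G).freeVars := by
        by_cases hr : x ∈ F.RV
        · exact Or.inl (RV_sub_free F hr)
        · exact hsub ⟨Or.inr hx, hr⟩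
      rcases unsafe_sub G x hx with h | h
      · exact h
      · exact absurd hfi (hqf x (List.mem_append.2 (Or.inr h)))
    exact ⟨ihF hndF (fun x hx hf => hqf x (List.mem_append.2 (Or.inl hx)) (Or.inl hf)) hF,
           ihG hndG (fun x hx hf => hqf x (List.mem_append.2 (Or.inr hx)) (Or.inr hf)) hG⟩
  | all y F ih =>
    intro hnd hqf hsub
    have hndF : F.quantVars.Nodup := ((List.nodup_cons).mp hnd).2
    have hyq : y ∉ F.quantVars := ((List.nodup_cons).mp hnd).1
    have hsubF : F.unsafeVars ⊆ F.freeVars \ {y} := hsub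
    refine ⟨ih hndF ?_ (hsubF.trans Set.diff_subset), fun hy => (hsubF hy).2 rfl⟩
    intro x hx hf
    have hxy : x ≠ y := fun h => hyq (h ▸ hx)
    exact hqf x (List.mem_cons_of_mem _ hx) ⟨hf, hxy⟩
  | ex y F ih =>
    intro hnd hqf hsub
    have hndF : F.quantVars.Nodup := ((List.nodup_cons).mp hnd).2
    have hyq : y ∉ F.quantVars := ((List.nodup_cons).mp hnd).1
    have hsubF : F.unsafeVars ⊆ F.freeVars \ {y} := hsub
    refine ⟨ih hndF ?_ (hsubF.trans Set.diff_subset), fun hy => (hsubF hy).2 rfl⟩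
    intro x hx hf
    have hxy : x ≠ y := fun h => hyq (h ▸ hx)
    exact hqf x (List.mem_cons_of_mem _ hx) ⟨hf, hxy⟩

lemma satStar_RV (hD : Nonempty D) (cI : C → D) (pI : PredI P ar D) (Cs : Set C) :
    ∀ (G : Fml C P ar) (v : ℕ → D), G.consts ⊆ Cs →
      G.satStar cI pI (fun p xs => pI p xs ∧ ∀ i, ∃ c ∈ Cs, xs i = cI c) v →
      ∀ x ∈ G.RV, ∃ c ∈ Cs, v x = cI c := by
  intro G
  induction G with
  | atom p t =>
    intro v hc hs x hx
    obtain ⟨i, hi⟩ := Set.mem_iUnion.mp hx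
    have hg : ∃ c ∈ Cs, (t i).eval cI v = cI c := hs.2 i
    cases h : t i with
    | var y =>
      rw [h] at hi
      have hxy : x = y := hi
      rw [h] at hg
      exact hxy ▸ hg
    | const c =>
      rw [h] at hi
      exact absurd hi (Set.notMem_empty x)
  | eq t₁ t₂ =>
    intro v hc hs x hx
    cases t₁ with
    | var a =>
      cases t₂ with
      | var b => exact absurd hx (Set.notMem_empty x)
      | const c =>
        have hxa : x = a := by
          rcases hx with h | h
          · exact h
          · exact absurd h (Set.notMem_empty x)
        exact ⟨c, hc (Or.inr rfl), hxa ▸ hs⟩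
    | const c =>
      cases t₂ with
      | var b =>
        have hxb : x = b := by
          rcases hx with h | h
          · exact absurd h (Set.notMem_empty x)
          · exact h
        exact ⟨c, hc (Or.inl rfl), hxb ▸ hs.symm⟩
      | const c' =>
        rcases hx with h | h
        · exact absurd h (Set.notMem_empty x)
        · exact absurd h (Set.notMem_empty x)
  | bot => intro v _ hs; exact hs.elim
  | and F G ihF ihG =>
    intro v hc hs x hx
    rcases hx with hx | hx
    · exact ihF v (fun c h => hc (Or.inl h)) hs.1 x hx
    · exact ihG v (fun c h => hc (Or.inr h)) hs.2 x hx
  | or F G ihF ihG =>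
    intro v hc hs x hx
    rcases hs with hs | hs
    · exact ihF v (fun c h => hc (Or.inl h)) hs x hx.1
    · exact ihG v (fun c h => hc (Or.inr h)) hs x hx.2
  | imp F G _ _ => intro v _ _ x hx; exact absurd hx (Set.notMem_empty x)
  | all y F ih =>
    intro v hc hs x hx
    obtain ⟨d⟩ := hD
    have := ih (Function.update v y d) hc (hs d) x hx.1
    rwa [Function.update_of_ne hx.2] at this
  | ex y F ih =>
    intro v hc hs x hx
    obtain ⟨d, hd⟩ := hs
    have := ih (Function.update v y d) hc hd x hx.1
    rwa [Function.update_of_ne hx.2] at this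

lemma sat_to_satStar (hD : Nonempty D) (cI : C → D) (pI : PredI P ar D) (Cs : Set C) :
    ∀ (G : Fml C P ar) (v : ℕ → D), nice G → G.consts ⊆ Cs →
      (∀ x ∈ G.unsafeVars, ∃ c ∈ Cs, v x = cI c) → G.sat cI pI v →
      G.satStar cI pI (fun p xs => pI p xs ∧ ∀ i, ∃ c ∈ Cs, xs i = cI c) v := by
  intro G
  induction G with
  | atom p t =>
    intro v _ hc hu hs
    refine ⟨hs, fun i => ?_⟩
    cases h : t i with
    | var y =>
      obtain ⟨c, h1, h2⟩ := hu y (Set.mem_iUnion.2 ⟨i, by rw [h]; exact rfl⟩)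
      exact ⟨c, h1, show (t i).eval cI v = cI c by rw [h]; exact h2⟩
    | const c =>
      exact ⟨c, hc (Set.mem_iUnion.2 ⟨i, by rw [h]; exact rfl⟩),
        show (t i).eval cI v = cI c by rw [h]; rfl⟩
  | eq t₁ t₂ => intro v _ _ _ hs; exact hs
  | bot => intro v _ _ _ hs; exact hs.elim
  | and F G ihF ihG =>
    intro v hn hc hu hs
    exact ⟨ihF v hn.1 (fun c h => hc (Or.inl h)) (fun x hx => hu x (Or.inl hx)) hs.1,
           ihG v hn.2 (fun c h => hc (Or.inr h)) (fun x hx => hu x (Or.inr hx)) hs.2⟩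
  | or F G ihF ihG =>
    intro v hn hc hu hs
    rcases hs with hs | hs
    · exact Or.inl (ihF v hn.1 (fun c h => hc (Or.inl h)) (fun x hx => hu x (Or.inl hx)) hs)
    · exact Or.inr (ihG v hn.2 (fun c h => hc (Or.inr h)) (fun x hx => hu x (Or.inr hx)) hs)
  | imp F G ihF ihG =>
    intro v hn hc hu hs
    refine ⟨fun hFs => ?_, hs⟩
    have hFsat : F.sat cI pI v := satStar_sat (fun p xs h => h.1) F v hFs
    refine ihG v hn.2 (fun c h => hc (Or.inr h)) ?_ (hs hFsat)
    intro x hx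
    by_cases hr : x ∈ F.RV
    · exact satStar_RV hD cI pI Cs F v (fun c h => hc (Or.inl h)) hFs x hr
    · exact hu x ⟨Or.inr hx, hr⟩
  | all y F ih =>
    intro v hn hc hu hs d
    refine ih (Function.update v y d) hn.1 hc ?_ (hs d)
    intro x hx
    have hxy : x ≠ y := fun h => hn.2 (h ▸ hx)
    rw [Function.update_of_ne hxy]
    exact hu x hx
  | ex y F ih =>
    intro v hn hc hu hs
    obtain ⟨d, hd⟩ := hs
    refine ⟨d, ih (Function.update v y d) hn.1 hc ?_ hd⟩
    intro x hx
    have hxy : x ≠ y := fun h => hn.2 (h ▸ hx)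
    rw [Function.update_of_ne hxy]
    exact hu x hx

lemma term_consts_finite : ∀ t : Term C, t.consts.Finite
  | .var _ => Set.finite_empty
  | .const c => Set.finite_singleton c

lemma fml_consts_finite : ∀ F : Fml C P ar, F.consts.Finite := by
  intro F
  induction F with
  | atom p t => exact Set.finite_iUnion fun i => term_consts_finite (t i)
  | eq t₁ t₂ => exact (term_consts_finite t₁).union (term_consts_finite t₂)
  | bot => exact Set.finite_empty
  | and F G ihF ihG => exact ihF.union ihG
  | or F G ihF ihG => exact ihF.union ihG
  | imp F G ihF ihG => exact ihF.union ihG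
  | all y F ih => exact ih
  | ex y F ih => exact ih

lemma fml_preds_finite : ∀ F : Fml C P ar, F.preds.Finite := by
  intro F
  induction F with
  | atom p t => exact Set.finite_singleton p
  | eq t₁ t₂ => exact Set.finite_empty
  | bot => exact Set.finite_empty
  | and F G ihF ihG => exact ihF.union ihG
  | or F G ihF ihG => exact ihF.union ihG
  | imp F G ihF ihG => exact ihF.union ihG
  | all y F ih => exact ih
  | ex y F ih => exact ih

end AuxProofs

/-- Proposition 6: if a sentence `F` in rectified form without function
constants of positive arity has no unsafe variables, then `SM[F]` is equivalent to the
conjunction of `F`, `U_F` and a finite number of loop formulas. -/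
theorem statement_10 {C P : Type} {ar : P → ℕ} (F : Fml C P ar)
    (hsent : F.freeVars = ∅) (hrect : F.rectified)
    (hsafe : F.unsafeVars = ∅) (hpreds : ∀ p : P, p ∈ F.preds) :
    ∃ Γ : Set (Set (Atom C P ar)), Γ.Finite ∧ (∀ Y ∈ Γ, Y.Finite) ∧
      ∀ (D : Type) (cI : C → D) (pI : PredI P ar D), Nonempty D →
        (satSM cI pI F ↔
          (F.satSent cI pI ∧ satU cI pI F ∧ ∀ Y ∈ Γ, satFLF cI pI F Y)) := by
  classical
  have hCs : F.consts.Finite := fml_consts_finite F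
  have hPfin : Finite P :=
    Set.finite_univ_iff.mp ((fml_preds_finite F).subset fun p _ => hpreds p)
  set A0 : Set (Atom C P ar) := {a | ∀ i, ∃ c ∈ F.consts, a.2 i = Term.const c} with hA0def
  have hA0 : A0.Finite := by
    have h1 : ∀ p : P, ({f : Fin (ar p) → Term C | ∀ i, f i ∈ Term.const '' F.consts}).Finite :=
      fun p => (Set.Finite.pi fun _ => hCs.image Term.const).subset fun f hf i _ => hf i
    have h2 : A0 ⊆ ⋃ p : P,
        (fun f => (⟨p, f⟩ : Atom C P ar)) '' {f | ∀ i, f i ∈ Term.const '' F.consts} := by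
      intro a ha
      refine Set.mem_iUnion.2 ⟨a.1, ⟨a.2, fun i => ?_, rfl⟩⟩
      obtain ⟨c, hc1, hc2⟩ := ha i
      exact ⟨c, hc1, hc2.symm⟩
    exact (Set.finite_iUnion fun p => ((h1 p).image _)).subset h2
  refine ⟨{Y | Y ⊆ A0 ∧ Y.Nonempty}, hA0.finite_subsets.subset fun Y hY => hY.1,
    fun Y hY => hA0.subset hY.1, ?_⟩
  intro D cI pI hD
  constructor
  · rintro ⟨hF, hmin⟩
    have hU : satU cI pI F := by
      by_contra hU
      apply hmin
      refine ⟨fun p xs => pI p xs ∧ ∀ i, ∃ c ∈ F.consts, xs i = cI c,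
        ⟨fun p xs h => h.1, fun heq => hU fun p xs hp i => ((heq p xs).mpr hp).2 i⟩, ?_⟩
      intro v
      exact sat_to_satStar hD cI pI F.consts F v
        (nice_of F hrect.1 hrect.2 (by rw [hsafe]; exact Set.empty_subset _))
        (subset_refl _) (by rw [hsafe]; intro x hx; exact hx.elim) (hF v)
    refine ⟨hF, hU, ?_⟩
    intro Y hY w hw hN
    apply hmin
    refine ⟨fun p xs => pI p xs ∧ ∀ t', (⟨p, t'⟩ : Atom C P ar) ∈ Y →
      ¬ ∀ i, xs i = (t' i).eval cI w, ⟨fun p xs h => h.1, ?_⟩, ?_⟩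
    · intro heq
      obtain ⟨a, ha⟩ := hY.2
      have h1 : pI a.1 (fun i => (a.2 i).eval cI w) := hw a ha
      exact ((heq a.1 _).mpr h1).2 a.2 ha fun i => rfl
    · intro v
      have hsw := (satNFES_iff cI pI Y w F w).mp hN
      exact (satStar_agree F fun x hx =>
        absurd (hsent ▸ hx) (Set.notMem_empty x)).mp hsw
  · rintro ⟨hF, hU, hLF⟩
    refine ⟨hF, ?_⟩
    rintro ⟨uI, ⟨hle, hne⟩, hstar⟩
    obtain ⟨d0⟩ := hD
    set w : ℕ → D := fun _ => d0 with hwdef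
    set Y : Set (Atom C P ar) := {a | a ∈ A0 ∧ pI a.1 (fun i => (a.2 i).eval cI w) ∧
      ¬ uI a.1 (fun i => (a.2 i).eval cI w)} with hYdef
    have hmk : ∀ p (xs : Fin (ar p) → D), pI p xs → ¬ uI p xs →
        ∃ t' : Fin (ar p) → Term C, (⟨p, t'⟩ : Atom C P ar) ∈ Y ∧
          ∀ i, xs i = (t' i).eval cI w := by
      intro p xs hp hu
      have hcs := hU p xs hp
      choose c hc1 hc2 using hcs
      have hxs : (fun i => (Term.const (c i)).eval cI w) = xs := funext fun i => (hc2 i).symm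
      refine ⟨fun i => Term.const (c i),
        ⟨fun i => ⟨c i, hc1 i, rfl⟩, by rw [hxs]; exact hp, by rw [hxs]; exact hu⟩,
        fun i => hc2 i⟩
    have hdiff : ∃ p xs, pI p xs ∧ ¬ uI p xs := by
      by_contra h
      push_neg at h
      exact hne fun p xs => ⟨hle p xs, h p xs⟩
    have hYne : Y.Nonempty := by
      obtain ⟨p, xs, hp, hu⟩ := hdiff
      obtain ⟨t', ht', _⟩ := hmk p xs hp hu
      exact ⟨⟨p, t'⟩, ht'⟩
    have hkey : (fun p xs => pI p xs ∧ ∀ t', (⟨p, t'⟩ : Atom C P ar) ∈ Y →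
        ¬ ∀ i, xs i = (t' i).eval cI w) = uI := by
      refine funext fun p => funext fun xs => propext ⟨?_, ?_⟩
      · rintro ⟨hp, hnomatch⟩
        by_contra hu
        obtain ⟨t', ht', hmatch⟩ := hmk p xs hp hu
        exact hnomatch t' ht' hmatch
      · intro hu
        refine ⟨hle p xs hu, ?_⟩
        intro t' ht' hmatch
        have he : (fun i => (t' i).eval cI w) = xs := funext fun i => (hmatch i).symm
        have h2 := ht'.2.2
        rw [he] at h2
        exact h2 hu
    exact hLF Y ⟨fun a ha => ha.1, hYne⟩ w (fun a ha => ha.2.1)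
      ((satNFES_iff cI pI Y w F w).mpr (by rw [hkey]; exact hstar w))

end SMLF
end

section
/- Let Π be a nondisjunctive program and let Y1 and Y2 be first-order loops of Π. If Y1 subsumes Y2, then FLF_Π(Y1) entails FLF_Π(Y2); that is, every model of FLF_Π(Y1) is a model of FLF_Π(Y2). -/
set_option linter.unusedVariables false

namespace SMLF

variable {C P D : Type} {ar : P → ℕ}

lemma eval_subst {C D : Type} (cI : C → D) (w : ℕ → D) (θ : ℕ → Term C) (t : Term C) :
    (t.subst θ).eval cI w = t.eval cI (fun x => (θ x).eval cI w) := by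
  cases t <;> rfl

/-- Proposition 3: if the first-order loop `Y₁` of a nondisjunctive program
`Π` subsumes the first-order loop `Y₂`, then `FLF_Π(Y₁)` entails `FLF_Π(Y₂)`. -/
theorem statement_14 {C P : Type} {ar : P → ℕ}
    (Pr : NProg C P ar) (hneg : ∀ r ∈ Pr, (NRule.neg r).isNegative)
    (Y₁ Y₂ : Set (Atom C P ar))
    (h1 : NProg.isFOLoop Pr Y₁) (h2 : NProg.isFOLoop Pr Y₂)
    (hsub : subsumes Y₁ Y₂) :
    ∀ (D : Type) (cI : C → D) (pI : PredI P ar D), Nonempty D →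
      NProg.satFLF cI pI Pr Y₁ → NProg.satFLF cI pI Pr Y₂ := by
  intro D cI pI _ hflf w hw
  obtain ⟨θ, hθ⟩ := hsub
  set w' : ℕ → D := fun x => (θ x).eval cI w with hw'
  have hY1 : ∀ a ∈ Y₁, Atom.holds cI pI w' a := by
    intro a ha
    have h2' := hw (Atom.subst θ a) (hθ ▸ Set.mem_image_of_mem _ ha)
    show pI a.1 fun i => Term.eval cI w' (a.2 i)
    have he : (fun i => Term.eval cI w' (a.2 i))
        = fun i => Term.eval cI w (Term.subst θ (a.2 i)) :=
      funext fun i => (eval_subst cI w θ (a.2 i)).symm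
    rw [he]; exact h2' 
  obtain ⟨r, hr, θ₁, hhv, hnv, hheadY, s, hbody, hnegr, hdiff⟩ := hflf w' hY1
  refine ⟨r, hr, fun x => (θ₁ x).map (Term.subst θ), ?_, ?_, ?_, s, ?_⟩
  · intro x hx
    obtain ⟨t, ⟨a, ha, i, hai⟩, ht⟩ := hhv x hx
    refine ⟨t.subst θ, ⟨Atom.subst θ a, hθ ▸ Set.mem_image_of_mem _ ha, i, ?_⟩, by simp [ht]⟩
    show (a.2 i).subst θ = t.subst θ
    rw [hai]
  · intro x hx; simp [hnv x hx]
  · have : Atom.subst (fun x => ((θ₁ x).map (Term.subst θ)).getD (Term.var x)) r.head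
        = Atom.subst θ (Atom.subst (fun x => (θ₁ x).getD (Term.var x)) r.head) := by
      unfold Atom.subst
      refine congrArg (Sigma.mk r.head.1) (funext fun i => ?_)
      cases hti : r.head.2 i with
      | const c => simp only [Term.subst, hti]
      | var x =>
        have hx : x ∈ NRule.headVars r := ⟨i, hti⟩
        obtain ⟨t, _, ht⟩ := hhv x hx
        simp only [Term.subst, hti, ht, Option.map_some, Option.getD_some]
    rw [this, ← hθ]
    exact Set.mem_image_of_mem _ hheadY
  · have hv : (fun x => match (θ₁ x).map (Term.subst θ) with
        | some t => t.eval cI w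
        | none => s x)
        = (fun x => match θ₁ x with
        | some t => t.eval cI w'
        | none => s x) := by
      funext x
      cases h : θ₁ x with
      | none => simp [h]
      | some t => simp [h, eval_subst, hw']
    simp only [hv]
    refine ⟨hbody, hnegr, ?_⟩
    intro b hb t' ht' hcontra
    rw [← hθ] at ht'
    obtain ⟨⟨q, t''⟩, haY, hae⟩ := ht'
    have hq : q = b.1 := congrArg Sigma.fst hae
    subst hq
    have ht'' : t' = fun i => (t'' i).subst θ := (eq_of_heq (Sigma.mk.inj_iff.mp hae).2).symm
    refine hdiff b hb t'' haY ?_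
    intro i
    have := hcontra i
    rw [ht''] at this
    rwa [eval_subst] at this


end SMLF
end
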